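/- arXiv:2104.01419 — 4 statements merged into one kernel-verified Lean document; each statement's English description precedes it below -/
import Mathlib

section
/- For all natural numbers n, s₁, s₂ such that n ≥ 16, n + s₁ + s₂ < 24, n + 12s₁ + 4s₂ ≡ 0 (mod 18), and n + 3s₁ + 4s₂ ≥ 36, the triple (n, s₁, s₂) is one of (16, 0, 5), (16, 4, 2), (18, 2, 3); in particular n + s₁ + s₂ ≥ 21. -/
theorem stmt_5 (n s₁ s₂ : ℕ) (h1 : n ≥ 16) (h2 : n + s₁ + s₂ < 24)
    (h3 : (n + 12 * s₁ + 4 * s₂) % 18 = 0)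
    (h4 : n + 3 * s₁ + 4 * s₂ ≥ 36) :
    ((n, s₁, s₂) = (16, 0, 5) ∨ (n, s₁, s₂) = (16, 4, 2) ∨
      (n, s₁, s₂) = (18, 2, 3)) ∧ n + s₁ + s₂ ≥ 21 := by
  simp only [Prod.mk.injEq]
  have hn : n ≤ 23 := by omega
  have hs1 : s₁ ≤ 7 := by omega
  have hs2 : s₂ ≤ 7 := by omega
  interval_cases n <;> interval_cases s₁ <;> interval_cases s₂ <;> omega
end

section
/- Let G be a group and let a₁, a₂, a₃, a₄, b₁, b₂, b₃, b₄ ∈ G satisfy the following relations (where [x, y] denotes the commutator x y x⁻¹ y⁻¹): (R0) b₄⁻¹ b₃⁻¹ b₂⁻¹ b₁⁻¹ (a₁ b₁ a₁⁻¹)(a₂ b₂ a₂⁻¹)(a₃ b₃ a₃⁻¹)(a₄ b₄ a₄⁻¹) = 1; (R1) b₁ b₂ a₂⁻¹ a₁ b₂ a₂⁻¹ a₁ = 1; (R2) b₂ a₂⁻¹ a₃ b₃ b₂ a₂⁻¹ a₃ = 1; (R3) a₁⁻¹ a₂ b₂ a₂⁻¹ a₃ b₃ a₃³ a₁⁻¹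 a₂ b₂ a₂⁻¹ a₃ = 1; (R4) a₁² b₁ b₂² a₂⁻¹ a₁ = 1; (R5) b₂⁻¹ a₁⁻¹ a₂ b₂ a₂⁻¹ a₁ = 1; (R6) b₂ a₃⁻¹ a₂ b₂⁻¹ a₂⁻¹ a₃ = 1; (R7) a₂⁻¹ [a₁, b₁⁻¹] a₁⁻¹ = 1; (R8) a₃⁻¹ a₂ b₂⁻¹ a₂⁻¹ [a₁, b₁⁻¹] b₂ a₂⁻¹ = 1; (R9) a₃⁻¹ a₂ b₂⁻¹ a₂⁻¹ [a₁, b₁⁻¹] b₂² a₂⁻¹ = 1; (R10) b₃ b₄ = 1; (R11) a₄⁻¹ b₄⁻¹ b₃⁻¹ a₃⁻¹ = 1; (R12) a₃⁻¹ [a₄, b₄] a₄⁻¹ = 1. Then a₁ = a₂ = a₃ = a₄ = b₁ = b₂ = b₃ = b₄ = 1. -/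
theorem stmt_6 (G : Type*) [Group G] (a₁ a₂ a₃ a₄ b₁ b₂ b₃ b₄ : G)
    (R0 : b₄⁻¹ * b₃⁻¹ * b₂⁻¹ * b₁⁻¹ * (a₁ * b₁ * a₁⁻¹) * (a₂ * b₂ * a₂⁻¹) *
      (a₃ * b₃ * a₃⁻¹) * (a₄ * b₄ * a₄⁻¹) = 1)
    (R1 : b₁ * b₂ * a₂⁻¹ * a₁ * b₂ * a₂⁻¹ * a₁ = 1)
    (R2 : b₂ * a₂⁻¹ * a₃ * b₃ * b₂ * a₂⁻¹ * a₃ = 1)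
    (R3 : a₁⁻¹ * a₂ * b₂ * a₂⁻¹ * a₃ * b₃ * a₃ ^ 3 * a₁⁻¹ * a₂ * b₂ * a₂⁻¹ * a₃ = 1)
    (R4 : a₁ ^ 2 * b₁ * b₂ ^ 2 * a₂⁻¹ * a₁ = 1)
    (R5 : b₂⁻¹ * a₁⁻¹ * a₂ * b₂ * a₂⁻¹ * a₁ = 1)
    (R6 : b₂ * a₃⁻¹ * a₂ * b₂⁻¹ * a₂⁻¹ * a₃ = 1)
    (R7 : a₂⁻¹ * (a₁ * b₁⁻¹ * a₁⁻¹ * b₁) * a₁⁻¹ = 1)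
    (R8 : a₃⁻¹ * a₂ * b₂⁻¹ * a₂⁻¹ * (a₁ * b₁⁻¹ * a₁⁻¹ * b₁) * b₂ * a₂⁻¹ = 1)
    (R9 : a₃⁻¹ * a₂ * b₂⁻¹ * a₂⁻¹ * (a₁ * b₁⁻¹ * a₁⁻¹ * b₁) * b₂ ^ 2 * a₂⁻¹ = 1)
    (R10 : b₃ * b₄ = 1)
    (R11 : a₄⁻¹ * b₄⁻¹ * b₃⁻¹ * a₃⁻¹ = 1)
    (R12 : a₃⁻¹ * (a₄ * b₄ * a₄⁻¹ * b₄⁻¹) * a₄⁻¹ = 1) :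
    a₁ = 1 ∧ a₂ = 1 ∧ a₃ = 1 ∧ a₄ = 1 ∧ b₁ = 1 ∧ b₂ = 1 ∧ b₃ = 1 ∧ b₄ = 1 := by
  have hb2 : b₂ = 1 := by
    have h := mul_right_cancel (R8.trans R9.symm)
    rw [pow_two, ← mul_assoc _ b₂ b₂] at h
    exact (left_eq_mul.mp h)
  subst hb2
  have hb4 : b₄ = b₃⁻¹ := eq_inv_of_mul_eq_one_right R10
  subst hb4
  simp only [one_mul, mul_one, inv_one, one_pow, inv_inv, mul_inv_cancel_right,
    inv_mul_cancel_right, mul_inv_cancel, inv_mul_cancel] at R0 R1 R2 R3 R4 R7 R8 R11 R12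
  -- a₄ = a₃⁻¹
  have ha4 : a₄ = a₃⁻¹ := by
    have e : a₃⁻¹ = a₄ * (a₄⁻¹ * a₃⁻¹) := by group
    rw [R11, mul_one] at e
    exact e.symm
  subst ha4
  simp only [inv_inv] at R0 R12
  -- a₃ commutes with b₃
  have hc3 : b₃ * a₃ = a₃ * b₃ := by
    have e : b₃ * a₃ = a₃ * b₃ * (a₃ * (a₃⁻¹ * (a₃⁻¹ * b₃⁻¹ * a₃ * b₃) * a₃)⁻¹ * a₃⁻¹) := by
      group
    rw [R12] at e
    simpa using e
  have c1 : a₃ * b₃ * a₃⁻¹ = b₃ := by rw [← hc3, mul_inv_cancel_right]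
  have c2 : a₃⁻¹ * b₃⁻¹ * a₃ = b₃⁻¹ := by
    rw [← mul_inv_rev, hc3, mul_inv_rev, inv_mul_cancel_right]
  rw [c1, c2, mul_assoc, mul_inv_cancel, mul_one] at R0
  -- a₁ commutes with b₁
  have c4 : a₁ * b₁⁻¹ * a₁⁻¹ * b₁ = 1 := by
    have e : a₁ * b₁⁻¹ * a₁⁻¹ * b₁ = (b₁⁻¹ * (a₁ * b₁ * a₁⁻¹))⁻¹ := by group
    rw [R0] at e
    simpa using e
  rw [c4, mul_one] at R7 R8
  -- a₂ = a₁⁻¹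
  have ha2 : a₂ = a₁⁻¹ := by
    have e : a₁⁻¹ = a₂ * (a₂⁻¹ * a₁⁻¹) := by group
    rw [R7, mul_one] at e
    exact e.symm
  subst ha2
  simp only [inv_inv] at R1 R2 R3 R4 R8
  -- a₃ = a₁ (subst eliminates a₁, leaving a₃)
  have ha3 : a₃ = a₁ := by
    have e : a₁ = a₃ * (a₃⁻¹ * a₁) := by group
    rw [R8, mul_one] at e
    exact e.symm
  subst ha3
  -- commutator form of hc3
  have hcw : b₃ * a₃ * b₃⁻¹ * a₃⁻¹ = 1 := by
    rw [hc3, mul_inv_cancel_right, mul_inv_cancel]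
  -- a₃ = 1
  have ha1 : a₃ = 1 := by
    have e : a₃ = (a₃ ^ 2 * (b₃ * a₃ * b₃⁻¹ * a₃⁻¹) * a₃⁻¹ ^ 2)⁻¹ *
        (a₃ * a₃ * b₃ * a₃ * a₃) *
        (a₃ ^ 2 * (a₃⁻¹ * a₃ * b₃ * a₃ ^ 3 * a₃⁻¹ * a₃)⁻¹ * a₃⁻¹ ^ 2) := by group
    rw [hcw, R2, R3] at e
    simpa using e
  subst ha1
  have hb1 : b₁ = 1 := by simpa using R1
  have hb3 : b₃ = 1 := by simpa using R2
  simp [hb1, hb3]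
end

section
/- Let G be a group and let a₁, a₂, a₃, a₄, b₁, b₂, b₃, b₄ ∈ G satisfy the following relations (where [x, y] denotes the commutator x y x⁻¹ y⁻¹): (S0) b₄⁻¹ b₃⁻¹ b₂⁻¹ b₁⁻¹ (a₁ b₁ a₁⁻¹)(a₂ b₂ a₂⁻¹)(a₃ b₃ a₃⁻¹)(a₄ b₄ a₄⁻¹) = 1; (S1) b₁ b₂ b₃ b₄ = 1; (S2) a₁ b₁ b₂ b₃ b₄ a₄ = 1; (S3) a₁ b₂ b₃ b₄ a₄ b₄⁻¹ = 1; (S4) a₂ b₂ b₃ [b₄, a₄] a₃ = 1; (S5) a₃⁻¹ a₂ b₂⁻¹ a₂⁻¹ [a₁, b₁⁻¹] b₂ a₂⁻¹ = 1; (S6) b₁ b₂² a₂⁻¹ a₁ b₂² a₂⁻¹ a₁ = 1; (S7) b₂ a₂⁻¹ [a₁, b₁⁻¹] a₁⁻¹ = 1; (S8) [a₁, b₁] = 1; (S9) b₃ a₃⁻¹ a₄ b₄ a₄⁻¹ b₃ a₃⁻¹ a₄ = 1; (S10) [a₄, b₄] = 1; (S11) a₄⁻¹ a₃ b₃⁻¹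 a₃⁻¹ a₂ b₂⁻¹ a₂⁻¹ [a₁, b₁⁻¹] b₂ b₃ a₃⁻¹ = 1. Then a₁ = a₂ = a₃ = a₄ = b₁ = b₂ = b₃ = b₄ = 1. -/
theorem stmt_7 (G : Type*) [Group G] (a₁ a₂ a₃ a₄ b₁ b₂ b₃ b₄ : G)
    (S0 : b₄⁻¹ * b₃⁻¹ * b₂⁻¹ * b₁⁻¹ * (a₁ * b₁ * a₁⁻¹) * (a₂ * b₂ * a₂⁻¹) *
      (a₃ * b₃ * a₃⁻¹) * (a₄ * b₄ * a₄⁻¹) = 1)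
    (S1 : b₁ * b₂ * b₃ * b₄ = 1)
    (S2 : a₁ * b₁ * b₂ * b₃ * b₄ * a₄ = 1)
    (S3 : a₁ * b₂ * b₃ * b₄ * a₄ * b₄⁻¹ = 1)
    (S4 : a₂ * b₂ * b₃ * (b₄ * a₄ * b₄⁻¹ * a₄⁻¹) * a₃ = 1)
    (S5 : a₃⁻¹ * a₂ * b₂⁻¹ * a₂⁻¹ * (a₁ * b₁⁻¹ * a₁⁻¹ * b₁) * b₂ * a₂⁻¹ = 1)
    (S6 : b₁ * b₂ ^ 2 * a₂⁻¹ * a₁ * b₂ ^ 2 * a₂⁻¹ * a₁ = 1)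
    (S7 : b₂ * a₂⁻¹ * (a₁ * b₁⁻¹ * a₁⁻¹ * b₁) * a₁⁻¹ = 1)
    (S8 : a₁ * b₁ * a₁⁻¹ * b₁⁻¹ = 1)
    (S9 : b₃ * a₃⁻¹ * a₄ * b₄ * a₄⁻¹ * b₃ * a₃⁻¹ * a₄ = 1)
    (S10 : a₄ * b₄ * a₄⁻¹ * b₄⁻¹ = 1)
    (S11 : a₄⁻¹ * a₃ * b₃⁻¹ * a₃⁻¹ * a₂ * b₂⁻¹ * a₂⁻¹ * (a₁ * b₁⁻¹ * a₁⁻¹ * b₁) *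
      b₂ * b₃ * a₃⁻¹ = 1) :
    a₁ = 1 ∧ a₂ = 1 ∧ a₃ = 1 ∧ a₄ = 1 ∧ b₁ = 1 ∧ b₂ = 1 ∧ b₃ = 1 ∧ b₄ = 1 := by
  -- commutator consequences of S8 and S10
  have k1 : a₁ * b₁⁻¹ * a₁⁻¹ * b₁ = 1 := by
    calc a₁ * b₁⁻¹ * a₁⁻¹ * b₁ = b₁⁻¹ * (a₁ * b₁ * a₁⁻¹ * b₁⁻¹)⁻¹ * b₁ := by group
    _ = b₁⁻¹ * 1⁻¹ * b₁ := by rw [S8]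
    _ = 1 := by group
  have k2 : b₄ * a₄ * b₄⁻¹ * a₄⁻¹ = 1 := by
    calc b₄ * a₄ * b₄⁻¹ * a₄⁻¹ = (a₄ * b₄ * a₄⁻¹ * b₄⁻¹)⁻¹ := by group
    _ = 1⁻¹ := by rw [S10]
    _ = 1 := by group
  have k1' : a₁ * b₁ * a₁⁻¹ = b₁ := mul_inv_eq_one.mp S8
  have k2' : a₄ * b₄ * a₄⁻¹ = b₄ := mul_inv_eq_one.mp S10
  -- b₂ = a₁ a₂
  rw [k1] at S7
  have e2 : b₂ = a₁ * a₂ := mul_inv_eq_one.mp (by rw [← S7]; group)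
  -- a₄ = a₁⁻¹
  have e4 : a₄ = a₁⁻¹ := by
    calc a₄ = (b₁ * b₂ * b₃ * b₄)⁻¹ * a₁⁻¹ * (a₁ * b₁ * b₂ * b₃ * b₄ * a₄) := by group
    _ = 1⁻¹ * a₁⁻¹ * 1 := by rw [S1, S2]
    _ = a₁⁻¹ := by group
  -- b₄ = b₁⁻¹
  rw [e4] at S3
  have e5 : b₄ = b₁⁻¹ := by
    have h1 : b₄ = a₁ * b₁⁻¹ * a₁⁻¹ := by
      calc b₄ = (a₁ * b₂ * b₃ * b₄ * a₁⁻¹ * b₄⁻¹)⁻¹ *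
            (a₁ * b₁⁻¹ * (b₁ * b₂ * b₃ * b₄) * a₁⁻¹) := by group
      _ = 1⁻¹ * (a₁ * b₁⁻¹ * 1 * a₁⁻¹) := by rw [S3, S1]
      _ = a₁ * b₁⁻¹ * a₁⁻¹ := by group
    calc b₄ = a₁ * b₁⁻¹ * a₁⁻¹ := h1
    _ = (a₁ * b₁⁻¹ * a₁⁻¹ * b₁) * b₁⁻¹ := by group
    _ = 1 * b₁⁻¹ := by rw [k1]
    _ = b₁⁻¹ := by group
  -- a₃
  rw [k1, e2] at S5
  have e3 : a₃ = a₁⁻¹ * a₂⁻¹ * a₁ := inv_mul_eq_one.mp (by rw [← S5]; group)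
  -- b₃
  rw [k2, e2, e3] at S4
  have T4 : a₂ * a₁ * a₂ * b₃ * a₁⁻¹ * a₂⁻¹ * a₁ = 1 := by rw [← S4]; group
  have e6 : b₃ = a₂⁻¹ * a₁⁻¹ * a₂⁻¹ * a₁⁻¹ * a₂ * a₁ := by
    calc b₃ = (a₂ * a₁ * a₂)⁻¹ * (a₂ * a₁ * a₂ * b₃ * a₁⁻¹ * a₂⁻¹ * a₁) *
          (a₁⁻¹ * a₂⁻¹ * a₁)⁻¹ := by group
    _ = (a₂ * a₁ * a₂)⁻¹ * 1 * (a₁⁻¹ * a₂⁻¹ * a₁)⁻¹ := by rw [T4]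
    _ = a₂⁻¹ * a₁⁻¹ * a₂⁻¹ * a₁⁻¹ * a₂ * a₁ := by group
  -- relation R1 from S11 (in a₁, a₂ only)
  rw [k1, e2, e3, e4, e6] at S11
  have R1 : a₂⁻¹ * a₂⁻¹ * a₁ * a₂ * a₁ * a₂ * a₁⁻¹ * a₂⁻¹ * a₁⁻¹ * a₂ * a₂ * a₁ = 1 := by
    rw [← S11]; group
  -- relation R3 from S0 (in a₁, a₂ only)
  rw [k1', k2'] at S0
  rw [e2, e3, e5, e6] at S0
  have R3' : b₁ * (a₁⁻¹ * a₂⁻¹ * a₁ * a₂ * a₁ * a₂⁻¹ * a₁⁻¹ * a₂⁻¹ * a₁⁻¹ * a₂ * a₂ * a₁) *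
      b₁⁻¹ = 1 := by rw [← S0]; group
  have R3 : a₁⁻¹ * a₂⁻¹ * a₁ * a₂ * a₁ * a₂⁻¹ * a₁⁻¹ * a₂⁻¹ * a₁⁻¹ * a₂ * a₂ * a₁ = 1 := by
    calc a₁⁻¹ * a₂⁻¹ * a₁ * a₂ * a₁ * a₂⁻¹ * a₁⁻¹ * a₂⁻¹ * a₁⁻¹ * a₂ * a₂ * a₁
        = b₁⁻¹ * (b₁ * (a₁⁻¹ * a₂⁻¹ * a₁ * a₂ * a₁ * a₂⁻¹ * a₁⁻¹ * a₂⁻¹ * a₁⁻¹ * a₂ * a₂ * a₁) *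
          b₁⁻¹) * b₁ := by group
    _ = b₁⁻¹ * 1 * b₁ := by rw [R3']
    _ = 1 := by group
  -- a₁a₂a₁ commutes with a₂
  have C1 : a₁ * a₂ * a₁ * a₂ = a₂ * a₁ * a₂ * a₁ := by
    calc a₁ * a₂ * a₁ * a₂
        = a₂ * (a₂ * a₁ * (a₁⁻¹ * a₂⁻¹ * a₁ * a₂ * a₁ * a₂⁻¹ * a₁⁻¹ * a₂⁻¹ * a₁⁻¹ * a₂ * a₂ * a₁) *
          a₁⁻¹ * a₂⁻¹)⁻¹ * a₂⁻¹ * (a₂ * a₁ * a₂ * a₁) := by group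
    _ = a₂ * (a₂ * a₁ * 1 * a₁⁻¹ * a₂⁻¹)⁻¹ * a₂⁻¹ * (a₂ * a₁ * a₂ * a₁) := by rw [R3]
    _ = a₂ * a₁ * a₂ * a₁ := by group
  have D : (a₁ * a₂ * a₁ * a₂) * (a₂ * a₁ * a₂ * a₁)⁻¹ = 1 := mul_inv_eq_one.mpr C1
  -- a₁ = a₂⁻¹
  have hxy : a₁ = a₂⁻¹ := by
    have h : a₁ = a₂⁻¹ * a₂⁻¹ * a₂⁻¹ * ((a₁ * a₂ * a₁ * a₂) * (a₂ * a₁ * a₂ * a₁)⁻¹)⁻¹ *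
        (a₂ * a₂) * (a₂⁻¹ * a₂⁻¹ * a₁ * a₂ * a₁ * a₂ * a₁⁻¹ * a₂⁻¹ * a₁⁻¹ * a₂ * a₂ * a₁) := by
      group
    rw [D, R1] at h
    calc a₁ = a₂⁻¹ * a₂⁻¹ * a₂⁻¹ * 1⁻¹ * (a₂ * a₂) * 1 := h
    _ = a₂⁻¹ := by group
  -- b₁ = a₂³ from S9
  rw [e3, e4, e5, e6] at S9
  rw [hxy] at S9
  have T9 : a₂ * a₂ * b₁⁻¹ * a₂ = 1 := by rw [← S9]; group
  have hb₁ : b₁ = a₂ * a₂ * a₂ := by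
    calc b₁ = a₂ * (a₂ * a₂ * b₁⁻¹ * a₂)⁻¹ * (a₂ * a₂) := by group
    _ = a₂ * 1⁻¹ * (a₂ * a₂) := by rw [T9]
    _ = a₂ * a₂ * a₂ := by group
  -- a₂ = 1 from S6
  rw [e2, hxy, hb₁] at S6
  have T6 : a₂⁻¹ = 1 := by rw [← S6]; group
  have ha₂ : a₂ = 1 := inv_eq_one.mp T6
  have ha₁ : a₁ = 1 := by rw [hxy, ha₂, inv_one]
  have ha₃ : a₃ = 1 := by rw [e3, ha₁, ha₂]; group
  have ha₄ : a₄ = 1 := by rw [e4, ha₁, inv_one]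
  have hb₁' : b₁ = 1 := by rw [hb₁, ha₂]; group
  have hb₂ : b₂ = 1 := by rw [e2, ha₁, ha₂]; group
  have hb₃ : b₃ = 1 := by rw [e6, ha₁, ha₂]; group
  have hb₄ : b₄ = 1 := by rw [e5, hb₁', inv_one]
  exact ⟨ha₁, ha₂, ha₃, ha₄, hb₁', hb₂, hb₃, hb₄⟩
end

section
/- Let G be a group and let a₁, a₂, a₃, b₁, b₂ ∈ G (with [x, y] denoting x y x⁻¹ y⁻¹) satisfy: (i) b₁ b₂ a₂⁻¹ a₁ b₂ a₂⁻¹ a₁ = 1; (ii) a₁² b₁ b₂² a₂⁻¹ a₁ = 1; (iii) a₂⁻¹ [a₁, b₁⁻¹] a₁⁻¹ = 1; (iv) a₃⁻¹ a₂ b₂⁻¹ a₂⁻¹ [a₁, b₁⁻¹] b₂ a₂⁻¹ = 1; (v) a₃⁻¹ a₂ b₂⁻¹ a₂⁻¹ [a₁, b₁⁻¹] b₂² a₂⁻¹ = 1. Then b₂ = 1, a₂ = a₁⁻¹, a₃ = a₁, b₁ = a₁⁻⁴, and a₁ b₁ = b₁ a₁. -/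
theorem stmt_10 (G : Type*) [Group G] (a₁ a₂ a₃ b₁ b₂ : G)
    (h1 : b₁ * b₂ * a₂⁻¹ * a₁ * b₂ * a₂⁻¹ * a₁ = 1)
    (h2 : a₁ ^ 2 * b₁ * b₂ ^ 2 * a₂⁻¹ * a₁ = 1)
    (h3 : a₂⁻¹ * (a₁ * b₁⁻¹ * a₁⁻¹ * b₁) * a₁⁻¹ = 1)
    (h4 : a₃⁻¹ * a₂ * b₂⁻¹ * a₂⁻¹ * (a₁ * b₁⁻¹ * a₁⁻¹ * b₁) * b₂ * a₂⁻¹ = 1)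
    (h5 : a₃⁻¹ * a₂ * b₂⁻¹ * a₂⁻¹ * (a₁ * b₁⁻¹ * a₁⁻¹ * b₁) * b₂ ^ 2 * a₂⁻¹ = 1) :
    b₂ = 1 ∧ a₂ = a₁⁻¹ ∧ a₃ = a₁ ∧ b₁ = a₁⁻¹ ^ 4 ∧ a₁ * b₁ = b₁ * a₁ := by
  have hb2 : b₂ = 1 := by
    have e := h4.trans h5.symm
    have e2 := mul_right_cancel e
    rw [pow_two] at e2
    exact left_eq_mul.mp (by rw [mul_assoc]; exact e2)
  subst hb2
  simp only [mul_one, one_pow, inv_one] at h1 h2 h3 h4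
  -- h1 : b₁ * a₂⁻¹ * a₁ * a₂⁻¹ * a₁ = 1
  -- h2 : a₁ ^ 2 * b₁ * a₂⁻¹ * a₁ = 1
  have e2 : b₁ * a₂⁻¹ * a₁ = a₁⁻¹ * a₁⁻¹ := by
    calc b₁ * a₂⁻¹ * a₁ = a₁⁻¹ * a₁⁻¹ * (a₁ ^ 2 * b₁ * a₂⁻¹ * a₁) := by group
    _ = a₁⁻¹ * a₁⁻¹ := by rw [h2]; group
  rw [e2] at h1
  -- h1 : a₁⁻¹ * a₁⁻¹ * a₂⁻¹ * a₁ = 1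
  have ha2 : a₂ = a₁⁻¹ := by
    have hi : a₂⁻¹ = a₁ := by
      calc a₂⁻¹ = a₁ * a₁ * (a₁⁻¹ * a₁⁻¹ * a₂⁻¹ * a₁) * a₁⁻¹ := by group
      _ = a₁ := by rw [h1]; group
    simpa using congrArg (·⁻¹) hi
  subst ha2
  have hc : a₁ * b₁⁻¹ * a₁⁻¹ * b₁ = 1 := by
    calc a₁ * b₁⁻¹ * a₁⁻¹ * b₁
        = a₁⁻¹ * ((a₁⁻¹)⁻¹ * (a₁ * b₁⁻¹ * a₁⁻¹ * b₁) * a₁⁻¹) * a₁ := by group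
    _ = 1 := by rw [h3]; group
  have hb1 : b₁ = a₁⁻¹ ^ 4 := by
    calc b₁ = a₁⁻¹ * a₁⁻¹ * (a₁ ^ 2 * b₁ * (a₁⁻¹)⁻¹ * a₁) * a₁⁻¹ * a₁⁻¹ := by group
    _ = a₁⁻¹ ^ 4 := by rw [h2]; group
  have hcomm : a₁ * b₁ = b₁ * a₁ := by
    calc a₁ * b₁ = b₁ * a₁ * (a₁⁻¹ * (a₁ * b₁⁻¹ * a₁⁻¹ * b₁)⁻¹ * a₁) := by group
    _ = b₁ * a₁ := by rw [hc]; group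
  have ha3 : a₃ = a₁ := by
    rw [hc] at h4
    have : a₃⁻¹ * a₁ = 1 := by
      calc a₃⁻¹ * a₁ = a₃⁻¹ * a₁⁻¹ * (a₁⁻¹)⁻¹ * 1 * (a₁⁻¹)⁻¹ := by group
      _ = 1 := h4
    have := inv_mul_eq_one.mp this
    exact this
  exact ⟨rfl, rfl, ha3, hb1, hcomm⟩
end
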